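/- With notation as above, for every α ∈ ℝ^k, αᵀ U_n U_nᵀ α → ‖α‖² as n → ∞. -/

import Mathlib

/-!
The `(i, j)` entry of `Uₙ Uₙᵀ` is a right-endpoint Riemann sum of `eᵢ eⱼ` on `[0, 1]` (missing
its last term `eᵢ(1) eⱼ(1) / (n + 1)`), so by uniform continuity it tends to
`∫ eᵢ eⱼ = δᵢⱼ`; the quadratic form `αᵀ Uₙ Uₙᵀ α` is a fixed linear combination of these entries.
-/

open Filter Set MeasureTheory Topology

lemma abs_mul_sub_integral_le {f : ℝ → ℝ} {u v c ε : ℝ} (huv : u ≤ v)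
    (hf : IntervalIntegrable f volume u v) (h : ∀ x ∈ Ioc u v, |c - f x| ≤ ε) :
    |c * (v - u) - ∫ x in u..v, f x| ≤ ε * (v - u) := by
  have key := intervalIntegral.norm_integral_le_of_norm_le_const (a := u) (b := v)
    (f := fun x => c - f x) (by simpa [uIoc_of_le huv] using h)
  rwa [intervalIntegral.integral_sub intervalIntegrable_const hf, intervalIntegral.integral_const,
    smul_eq_mul, mul_comm, abs_of_nonneg (sub_nonneg.2 huv)] at key

lemma abs_riemann_sum_sub_integral_le {f : ℝ → ℝ} {N : ℕ} {ε : ℝ} (hN : 0 < N)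
    (hf : ContinuousOn f (Icc 0 1))
    (hmod : ∀ x ∈ Icc (0:ℝ) 1, ∀ y ∈ Icc (0:ℝ) 1, dist x y ≤ 1 / N → dist (f x) (f y) ≤ ε) :
    |∑ r ∈ Finset.range N, f ((r + 1) / N) * (1 / N) - ∫ x in (0:ℝ)..1, f x| ≤ ε := by
  have hN' : (0:ℝ) < N := by exact_mod_cast hN
  set a : ℕ → ℝ := fun r => r / N with ha
  have ha_mem : ∀ r ≤ N, a r ∈ Icc (0:ℝ) 1 := fun r hr =>
    ⟨by positivity, div_le_one_of_le₀ (by exact_mod_cast hr) hN'.le⟩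
  have hstep : ∀ r, a (r + 1) - a r = 1 / N := fun r => by simp only [ha]; push_cast; ring
  have hle : ∀ r, a r ≤ a (r + 1) := fun r => sub_nonneg.1 (by rw [hstep]; positivity)
  have hsub : ∀ r < N, Icc (a r) (a (r + 1)) ⊆ Icc 0 1 := fun r hr =>
    Icc_subset_Icc (ha_mem r hr.le).1 (ha_mem (r + 1) hr).2
  have hsplit : ∫ x in (0:ℝ)..1, f x = ∑ r ∈ Finset.range N, ∫ x in a r..a (r + 1), f x := by
    rw [intervalIntegral.sum_integral_adjacent_intervals fun r hr =>
      (hf.mono (by rw [uIcc_of_le (hle r)]; exact hsub r hr)).intervalIntegrable]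
    simp [ha, hN'.ne']
  have hterm : ∀ r ∈ Finset.range N,
      |f ((r + 1) / N) * (1 / N) - ∫ x in a r..a (r + 1), f x| ≤ ε * (1 / N) := by
    intro r hr
    have hr : r < N := Finset.mem_range.1 hr
    have hpt : ((r:ℝ) + 1) / N = a (r + 1) := by simp [ha]
    rw [hpt, ← hstep]
    refine abs_mul_sub_integral_le (hle r)
      (hf.mono (by rw [uIcc_of_le (hle r)]; exact hsub r hr)).intervalIntegrable fun x hx => ?_
    rw [← Real.dist_eq]
    refine hmod _ (ha_mem (r + 1) hr) x (hsub r hr (Ioc_subset_Icc_self hx)) ?_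
    rw [Real.dist_eq, abs_of_nonneg (by linarith [hx.2]), ← hstep r]
    linarith [hx.1]
  calc |∑ r ∈ Finset.range N, f ((r + 1) / N) * (1 / N) - ∫ x in (0:ℝ)..1, f x|
      = |∑ r ∈ Finset.range N, (f ((r + 1) / N) * (1 / N) - ∫ x in a r..a (r + 1), f x)| := by
        rw [hsplit, Finset.sum_sub_distrib]
    _ ≤ ∑ r ∈ Finset.range N, |f ((r + 1) / N) * (1 / N) - ∫ x in a r..a (r + 1), f x| :=
        Finset.abs_sum_le_sum_abs _ _
    _ ≤ ∑ _r ∈ Finset.range N, ε * (1 / N) := Finset.sum_le_sum hterm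
    _ = ε := by rw [Finset.sum_const, Finset.card_range, nsmul_eq_mul]; field_simp

theorem tendsto_riemann_sum_integral {f : ℝ → ℝ} (hf : ContinuousOn f (Icc 0 1)) :
    Tendsto (fun N : ℕ => ∑ r ∈ Finset.range N, f ((r + 1) / N) * (1 / N)) atTop
      (𝓝 (∫ x in (0:ℝ)..1, f x)) := by
  refine Metric.tendsto_atTop.2 fun ε hε => ?_
  obtain ⟨δ, hδ, hfδ⟩ := Metric.uniformContinuousOn_iff_le.1
    (isCompact_Icc.uniformContinuousOn_of_continuous hf) (ε / 2) (half_pos hε)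
  obtain ⟨N₀, hN₀⟩ := exists_nat_one_div_lt hδ
  refine ⟨N₀ + 1, fun N hN => ?_⟩
  have hN' : (N₀ + 1 : ℝ) ≤ N := by exact_mod_cast hN
  refine (abs_riemann_sum_sub_integral_le (by omega) hf
    fun x hx y hy hxy => hfδ x hx y hy ?_).trans_lt (half_lt_self hε)
  calc dist x y ≤ 1 / N := hxy
    _ ≤ 1 / (N₀ + 1) := by gcongr
    _ ≤ δ := hN₀.le

theorem tendsto_riemann_sum_succ_integral {f : ℝ → ℝ} (hf : ContinuousOn f (Icc 0 1)) :
    Tendsto (fun n : ℕ => ∑ r ∈ Finset.range n, f ((r + 1) / (n + 1)) * (1 / (n + 1)))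
      atTop (𝓝 (∫ x in (0:ℝ)..1, f x)) := by
  have hlast : Tendsto (fun n : ℕ => f 1 * (1 / ((n : ℝ) + 1))) atTop (𝓝 0) := by
    simpa using tendsto_one_div_add_atTop_nhds_zero_nat.const_mul (f 1)
  have hsucc := (tendsto_add_atTop_iff_nat 1).2 (tendsto_riemann_sum_integral hf)
  rw [← sub_zero (∫ x in (0:ℝ)..1, f x)]
  refine (hsucc.sub hlast).congr fun n => ?_
  rw [Finset.sum_range_succ]
  push_cast
  rw [div_self (by positivity)]
  ring

/-- For continuous orthonormal functions `e₁, …, e_k` in `L²[0,1]` and any `α ∈ ℝ^k`,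
`αᵀ Uₙ Uₙᵀ α → ‖α‖²` as `n → ∞`, where `Uₙ` has entries `√(Δx) e_j(i/(n+1))`. -/
theorem stmt_4 (k : ℕ) (e : Fin k → ℝ → ℝ)
    (hcont : ∀ i, ContinuousOn (e i) (Set.Icc (0:ℝ) 1))
    (horth : ∀ i j, (∫ x in (0:ℝ)..1, e i x * e j x) = if i = j then (1:ℝ) else 0)
    (α : Fin k → ℝ) :
    Tendsto
      (fun n : ℕ => ∑ i : Fin k, ∑ j : Fin k, α i * α j *
        (∑ r ∈ Finset.range n,
          e i ((r + 1 : ℝ) / (n + 1)) * e j ((r + 1 : ℝ) / (n + 1)) * (1 / (n + 1 : ℝ))))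
      atTop (nhds (∑ i : Fin k, (α i) ^ 2)) := by
  have hentry : ∀ i j, Tendsto (fun n : ℕ => ∑ r ∈ Finset.range n,
      e i ((r + 1 : ℝ) / (n + 1)) * e j ((r + 1 : ℝ) / (n + 1)) * (1 / (n + 1 : ℝ)))
      atTop (𝓝 (if i = j then 1 else 0)) := fun i j =>
    horth i j ▸ tendsto_riemann_sum_succ_integral ((hcont i).mul (hcont j))
  have hlimit : ∑ i : Fin k, ∑ j : Fin k, α i * α j * (if i = j then 1 else 0)
      = ∑ i : Fin k, α i ^ 2 := by
    simp [sq]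
  rw [← hlimit]
  exact tendsto_finsetSum _ fun i _ => tendsto_finsetSum _ fun j _ => (hentry i j).const_mul _
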